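/- For every point p ∈ ℝ², there exist three points c₁, c₂, c₃ ∈ ℝ² such that the closed Euclidean disc of radius 2/√3 centered at p is contained in the union of the closed Euclidean discs of radius 1 centered at c₁, c₂, and c₃. -/

import Mathlib

/-!
Place the centres at distance `r = 1/√3` from `p` in the three directions `u₀, u₁, u₂` at
angles `0, 2π/3, 4π/3`. Every vector `x` makes an angle of at most `π/3` with some `uᵢ`, i.e.
`‖x‖ ≤ 2⟪x, uᵢ⟫`; this follows from `∑ ⟪x, uᵢ⟫ = 0` and `∑ ⟪x, uᵢ⟫² = 3/2 ‖x‖²`. For such `x`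
with `‖x‖ ≤ 2r` the law of cosines gives `‖x - r uᵢ‖² ≤ ‖x‖² - r‖x‖ + r² ≤ 3r² = 1`.
-/

open Real
open scoped RealInnerProductSpace

lemma exists_le_two_mul_of_sum_eq_zero (p : Fin 3 → ℝ) {s : ℝ} (hsum : ∑ i, p i = 0)
    (hsq : ∑ i, p i ^ 2 = 3 / 2 * s ^ 2) : ∃ i, s ≤ 2 * p i := by
  rw [Fin.sum_univ_three] at hsum hsq
  by_contra! h
  have h0 := h 0
  have h1 := h 1
  have h2 := h 2
  nlinarith [mul_pos (sub_pos.2 h0) (sub_pos.2 h1), mul_pos (sub_pos.2 h1) (sub_pos.2 h2)]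

section InnerProductSpace

variable {F : Type*} [NormedAddCommGroup F] [InnerProductSpace ℝ F]

lemma norm_sub_le_sqrt_three_mul {x c : F} (hx : ‖x‖ ≤ 2 * ‖c‖)
    (hxc : ‖x‖ * ‖c‖ ≤ 2 * ⟪x, c⟫) : ‖x - c‖ ≤ √3 * ‖c‖ := by
  have hsq : ‖x - c‖ ^ 2 ≤ (√3 * ‖c‖) ^ 2 := by
    rw [norm_sub_sq_real, mul_pow, sq_sqrt zero_le_three]
    nlinarith [mul_nonneg (sub_nonneg.2 hx) (add_nonneg (norm_nonneg x) (norm_nonneg c))]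
  exact le_of_sq_le_sq hsq (by positivity)

lemma closedBall_subset_iUnion_closedBall_add_smul {ι : Type*} {u : ι → F}
    (hu : ∀ i, ‖u i‖ = 1) (hdir : ∀ x, ∃ i, ‖x‖ ≤ 2 * ⟪x, u i⟫) (p : F) {r : ℝ} (hr : 0 ≤ r) :
    Metric.closedBall p (2 * r) ⊆ ⋃ i, Metric.closedBall (p + r • u i) (√3 * r) := by
  intro y hy
  rw [mem_closedBall_iff_norm] at hy
  obtain ⟨i, hi⟩ := hdir (y - p)
  have hnorm : ‖r • u i‖ = r := by rw [norm_smul, hu, mul_one, Real.norm_of_nonneg hr]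
  have hclose : ‖y - p - r • u i‖ ≤ √3 * ‖r • u i‖ :=
    norm_sub_le_sqrt_three_mul (by rwa [hnorm])
      (by rw [hnorm, inner_smul_right]; nlinarith)
  rw [hnorm, sub_sub] at hclose
  exact Set.mem_iUnion.2 ⟨i, mem_closedBall_iff_norm.2 hclose⟩

end InnerProductSpace

noncomputable def triangleDirections : Fin 3 → EuclideanSpace ℝ (Fin 2) :=
  ![!₂[1, 0], !₂[-1/2, √3/2], !₂[-1/2, -√3/2]]

lemma norm_triangleDirections (i : Fin 3) : ‖triangleDirections i‖ = 1 := by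
  have h3 : √3 ^ 2 = 3 := sq_sqrt (by norm_num)
  rw [← pow_eq_one_iff_of_nonneg (norm_nonneg _) two_ne_zero, EuclideanSpace.real_norm_sq_eq]
  fin_cases i <;> simp [triangleDirections, Fin.sum_univ_two, div_pow, h3] <;> norm_num

lemma sum_inner_triangleDirections (x : EuclideanSpace ℝ (Fin 2)) :
    ∑ i, ⟪x, triangleDirections i⟫ = 0 := by
  simp only [triangleDirections, PiLp.inner_apply, RCLike.inner_apply, ringHom_apply,
    Fin.sum_univ_two, Fin.sum_univ_three, Matrix.cons_val_zero, Matrix.cons_val_one,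
    Matrix.cons_val_fin_one, Matrix.cons_val]
  ring

lemma sum_inner_triangleDirections_sq (x : EuclideanSpace ℝ (Fin 2)) :
    ∑ i, ⟪x, triangleDirections i⟫ ^ 2 = 3 / 2 * ‖x‖ ^ 2 := by
  have h3 : √3 ^ 2 = 3 := sq_sqrt (by norm_num)
  simp only [triangleDirections, PiLp.inner_apply, RCLike.inner_apply, ringHom_apply,
    Fin.sum_univ_two, Fin.sum_univ_three, Matrix.cons_val_zero, Matrix.cons_val_one,
    Matrix.cons_val_fin_one, Matrix.cons_val, EuclideanSpace.real_norm_sq_eq]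
  linear_combination (x 1 ^ 2 / 2) * h3

lemma exists_norm_le_two_mul_inner_triangleDirections (x : EuclideanSpace ℝ (Fin 2)) :
    ∃ i, ‖x‖ ≤ 2 * ⟪x, triangleDirections i⟫ :=
  exists_le_two_mul_of_sum_eq_zero _ (sum_inner_triangleDirections x)
    (sum_inner_triangleDirections_sq x)

theorem stmt_4 (p : EuclideanSpace ℝ (Fin 2)) :
    ∃ c₁ c₂ c₃ : EuclideanSpace ℝ (Fin 2),
      Metric.closedBall p (2 / Real.sqrt 3) ⊆
        Metric.closedBall c₁ 1 ∪ Metric.closedBall c₂ 1 ∪ Metric.closedBall c₃ 1 := by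
  have hcover := closedBall_subset_iUnion_closedBall_add_smul norm_triangleDirections
    exists_norm_le_two_mul_inner_triangleDirections p (r := (√3)⁻¹) (by positivity)
  rw [← div_eq_mul_inv, mul_inv_cancel₀ (by positivity)] at hcover
  set c := fun i ↦ p + (√3)⁻¹ • triangleDirections i
  refine ⟨c 0, c 1, c 2, fun y hy => ?_⟩
  obtain ⟨i, hi⟩ := Set.mem_iUnion.1 (hcover hy)
  fin_cases i
  exacts [Or.inl (Or.inl hi), Or.inl (Or.inr hi), Or.inr hi]
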